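/- Let n ≥ 1, let φ ∈ ℝⁿ satisfy φ_i ≥ 0 and ∑_{i=1}^n φ_i = 1, let τ > 0 and η > 0, and suppose all items are in stock (s_v = 1 for all v). Then for any τ' > 0, setting η' = η(1 + τ')/(1 + τ) gives η' · φ_i / (τ' + ∑_v φ_v) = η · φ_i / (τ + ∑_v φ_v) for every item i; that is, the observed purchase rates η·f_i^{mnl} under full stock are identical for the parameter pairs (η, τ) and (η', τ'). -/
import Mathlib


/-- Non-identifiability of the MNL parameter `τ` with unknown arrival rate:
under full stock, the parameter pairs `(η, τ)` and `(η', τ')` with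
`η' = η (1 + τ') / (1 + τ)` produce identical observed purchase rates
`η · φ i / (τ + ∑_v φ v)` for every item `i`. -/
theorem mnl_tau_unidentifiable
    (n : ℕ) (hn : 1 ≤ n) (φ : Fin n → ℝ)
    (hφnn : ∀ i, 0 ≤ φ i) (hφsum : ∑ i, φ i = 1)
    (τ η : ℝ) (hτ : 0 < τ) (hη : 0 < η)
    (s : Fin n → ℝ) (hs : ∀ v, s v = 1)
    (τ' η' : ℝ) (hτ' : 0 < τ')
    (hη' : η' = η * (1 + τ') / (1 + τ)) :
    ∀ i, η' * (φ i / (τ' + ∑ v, φ v)) = η * (φ i / (τ + ∑ v, φ v)) := by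
  intro i
  rw [hη', hφsum]
  have h1 : (1 : ℝ) + τ ≠ 0 := by positivity
  have h2 : τ' + 1 ≠ 0 := by positivity
  have h3 : τ + 1 ≠ 0 := by positivity
  field_simp
  ring
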